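/- Let α > 0. Then ζ(1+α) ≥ 1/α + 1/2 + (α+1)/12 − (α+1)(α+2)(α+3)/720. -/

import Mathlib

/-!
Euler–Maclaurin summation with remainder after the `B₆` term. On each interval `[a, a + 1]`,
integrating by parts against the Bernoulli polynomials `Bₖ(x - a) / k!` shows that
`∫ₐ^{a+1} f` is bounded by the trapezoidal value corrected by the `B₂` and `B₄` terms, as soon as
`f⁽⁶⁾ ≥ 0`, since `B₆(t) - B₆ ≤ 0` on `[0, 1]`. For `f(x) = x^{-s}` this says that the truncated
Euler–Maclaurin approximation `T(x)` of the tail `∑_{n ≥ x} n^{-s}` satisfies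
`T(a) ≤ a^{-s} + T(a + 1)`. Telescoping and `T(x) → 0` give `ζ(s) ≥ T(1)`, which is the claimed
bound for `s = 1 + α`.
-/

open Finset Set Filter Topology Nat

theorem hasDerivAt_sum_alternating_mul (p f : ℕ → ℝ → ℝ) (n : ℕ) {x : ℝ}
    (hp : ∀ k < n, HasDerivAt (p (k + 1)) (p k x) x)
    (hf : ∀ k < n, HasDerivAt (f k) (f (k + 1) x) x) :
    HasDerivAt (fun y => ∑ k ∈ range n, (-1) ^ k * (p (k + 1) y * f k y))
      (p 0 x * f 0 x - (-1) ^ n * (p n x * f n x)) x := by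
  induction n with
  | zero => simpa using hasDerivAt_const x (0 : ℝ)
  | succ n ih =>
    simp_rw [sum_range_succ]
    refine ((ih (fun k hk => hp k (by omega)) (fun k hk => hf k (by omega))).fun_add
      (((hp n (by omega)).fun_mul (hf n (by omega))).const_mul ((-1) ^ n))).congr_deriv ?_
    ring

theorem hasDerivAt_bernoulliFun_div_factorial (k : ℕ) (x : ℝ) :
    HasDerivAt (fun t => bernoulliFun (k + 1) t / (k + 1)!) (bernoulliFun k x / k !) x := by
  refine ((hasDerivAt_bernoulliFun (k + 1) x).div_const ((k + 1)! : ℝ)).congr_deriv ?_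
  push_cast [Nat.factorial_succ, Nat.add_sub_cancel]
  field_simp

/-- The sum stops at `k = m - 2`: the `k = m - 1` term is absorbed into the remainder, whose kernel
is `Bₘ(t) - Bₘ` rather than `Bₘ(t)`. -/
theorem eulerMaclaurin_sub_le {m : ℕ} (hm : 2 ≤ m) {a : ℝ} {F : ℝ → ℝ} {f : ℕ → ℝ → ℝ}
    (hF : ∀ x ∈ Icc a (a + 1), HasDerivAt F (f 0 x) x)
    (hf : ∀ k < m, ∀ x ∈ Icc a (a + 1), HasDerivAt (f k) (f (k + 1) x) x)
    (hsign : ∀ x ∈ Icc a (a + 1),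
      (-1) ^ m * (bernoulliFun m (x - a) - bernoulli m) * f m x ≤ 0) :
    F (a + 1) - F a ≤ (f 0 a + f 0 (a + 1)) / 2
      + ∑ k ∈ Ico 1 (m - 1), (-1) ^ k * bernoulli (k + 1) / (k + 1)! * (f k (a + 1) - f k a) := by
  obtain ⟨n, rfl⟩ : ∃ n, m = n + 2 := ⟨m - 2, by omega⟩
  set b : ℕ → ℝ → ℝ := fun k y => bernoulliFun k (y - a) / (k ! : ℝ)
  set c : ℝ := (-1) ^ (n + 2) * bernoulli (n + 2) / (n + 2)!
  set G : ℝ → ℝ := fun y =>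
    F y - ∑ k ∈ range (n + 2), (-1) ^ k * (b (k + 1) y * f k y) - c * f (n + 1) y
  have hG : ∀ x ∈ Icc a (a + 1), HasDerivAt G
      ((-1) ^ (n + 2) * (bernoulliFun (n + 2) (x - a) - bernoulli (n + 2)) * f (n + 2) x
        / (n + 2)!) x := by
    intro x hx
    have hb : ∀ k < n + 2, HasDerivAt (b (k + 1)) (b k x) x := fun k _ =>
      (hasDerivAt_bernoulliFun_div_factorial k (x - a)).comp_sub_const x a
    refine ((hF x hx).sub (hasDerivAt_sum_alternating_mul b f (n + 2) hb
      (fun k hk => hf k hk x hx)) |>.sub ((hf (n + 1) (by omega) x hx).const_mul c)).congr_deriv ?_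
    simp only [b, c, bernoulliFun_zero, Nat.factorial_zero, Nat.cast_one, div_one, one_mul]
    ring
  have hGa : G (a + 1) ≤ G a :=
    antitoneOn_of_hasDerivWithinAt_nonpos (convex_Icc a (a + 1))
      (fun x hx => (hG x hx).continuousAt.continuousWithinAt)
      (fun x hx => (hG x (interior_subset hx)).hasDerivWithinAt)
      (fun x hx => div_nonpos_of_nonpos_of_nonneg (hsign x (interior_subset hx)) (by positivity))
      (left_mem_Icc.2 (by linarith)) (right_mem_Icc.2 (by linarith)) (by linarith)
  have hends : ∀ k, b (k + 2) (a + 1) = b (k + 2) a := fun k => by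
    simp only [b, add_sub_cancel_left, sub_self]
    rw [bernoulliFun_endpoints_eq_of_ne_one (by omega)]
  have hb₁ : b 1 (a + 1) = 1 / 2 ∧ b (0 + 1) a = -1 / 2 := by
    simp only [b, bernoulliFun_one]; norm_num
  have hb_top : b (n + 1 + 1) a = bernoulli (n + 2) / (n + 2)! := by
    simp only [b, sub_self, bernoulliFun_eval_zero]
  simp only [G, sum_range_succ' _ (n + 1), sum_range_succ, hends, hb₁, hb_top, c] at hGa
  set S₁ := ∑ k ∈ range n, (-1) ^ (k + 1) * (b (k + 2) a * f (k + 1) (a + 1))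
  set S₀ := ∑ k ∈ range n, (-1) ^ (k + 1) * (b (k + 1 + 1) a * f (k + 1) a)
  have hsum : ∑ k ∈ Ico 1 (n + 2 - 1),
      (-1) ^ k * (bernoulli (k + 1) : ℝ) / (k + 1)! * (f k (a + 1) - f k a) = S₁ - S₀ := by
    rw [← sum_sub_distrib, show n + 2 - 1 = n + 1 by omega, sum_Ico_eq_sum_range,
      Nat.add_sub_cancel]
    refine sum_congr rfl fun k _ => ?_
    simp only [b, sub_self, bernoulliFun_eval_zero, add_comm 1 k]
    ring
  rw [hsum]
  linear_combination hGa

theorem bernoulli_three : bernoulli 3 = 0 :=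
  bernoulli_eq_zero_of_odd (by decide) (by norm_num)

theorem bernoulli_four : bernoulli 4 = -1 / 30 := by
  rw [bernoulli_eq_bernoulli'_of_ne_one (by norm_num), bernoulli'_four]

theorem bernoulli_five : bernoulli 5 = 0 :=
  bernoulli_eq_zero_of_odd (by decide) (by norm_num)

theorem bernoulliFun_six_sub_bernoulli_six (t : ℝ) :
    bernoulliFun 6 t - bernoulli 6 = -(t * (1 - t)) ^ 2 * (1 + 2 * (t * (1 - t))) / 2 := by
  simp [bernoulliFun, Polynomial.bernoulli_def, sum_range_succ, bernoulli_three, bernoulli_four,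
    bernoulli_five, Nat.choose]
  ring

theorem eulerMaclaurin_six_sub_le {a : ℝ} {F : ℝ → ℝ} {f : ℕ → ℝ → ℝ}
    (hF : ∀ x ∈ Icc a (a + 1), HasDerivAt F (f 0 x) x)
    (hf : ∀ k < 6, ∀ x ∈ Icc a (a + 1), HasDerivAt (f k) (f (k + 1) x) x)
    (hf₆ : ∀ x ∈ Icc a (a + 1), 0 ≤ f 6 x) :
    F (a + 1) - F a ≤ (f 0 a + f 0 (a + 1)) / 2 - (f 1 (a + 1) - f 1 a) / 12
      + (f 3 (a + 1) - f 3 a) / 720 := by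
  have hsign : ∀ x ∈ Icc a (a + 1),
      (-1) ^ 6 * (bernoulliFun 6 (x - a) - bernoulli 6) * f 6 x ≤ 0 := by
    intro x hx
    have ht : 0 ≤ (x - a) * (1 - (x - a)) := mul_nonneg (by linarith [hx.1]) (by linarith [hx.2])
    have hrem : 0 ≤ ((x - a) * (1 - (x - a))) ^ 2 * (1 + 2 * ((x - a) * (1 - (x - a)))) / 2
        * f 6 x := mul_nonneg (by positivity) (hf₆ x hx)
    rw [bernoulliFun_six_sub_bernoulli_six]
    linarith
  have h := eulerMaclaurin_sub_le (by norm_num) hF hf hsign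
  simp [sum_Ico_succ_top, bernoulli_two, bernoulli_three, bernoulli_four, bernoulli_five,
    Nat.factorial] at h
  linarith

theorem hasDerivAt_descPochhammer_mul_rpow (r : ℝ) (k : ℕ) {x : ℝ} (hx : 0 < x) :
    HasDerivAt (fun y => (descPochhammer ℝ k).eval r * y ^ (r - k))
      ((descPochhammer ℝ (k + 1)).eval r * x ^ (r - (k + 1 : ℕ))) x := by
  refine ((Real.hasDerivAt_rpow_const (Or.inl hx.ne')).const_mul _).congr_deriv ?_
  rw [descPochhammer_succ_eval, Nat.cast_succ, sub_sub]
  ring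

theorem descPochhammer_eval_neg_pos_of_even {s : ℝ} (hs : 0 < s) {k : ℕ} (hk : Even k) :
    0 < (descPochhammer ℝ k).eval (-s) := by
  have := ascPochhammer_eval_neg_eq_descPochhammer ℝ (-s) k
  rw [neg_neg, hk.neg_one_pow, one_mul] at this
  exact this ▸ ascPochhammer_pos _ _ hs

/-- The Euler–Maclaurin approximation of `∑_{n ≥ x} n ^ (-s)`, up to the `B₄` term. -/
noncomputable def zetaTailApprox (s x : ℝ) : ℝ :=
  x ^ (1 - s) / (s - 1) + x ^ (-s) / 2 + s * x ^ (-s - 1) / 12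
    - s * (s + 1) * (s + 2) * x ^ (-s - 3) / 720

theorem zetaTailApprox_le {s a : ℝ} (hs : 0 < s) (hs₁ : s ≠ 1) (ha : 0 < a) :
    zetaTailApprox s a ≤ a ^ (-s) + zetaTailApprox s (a + 1) := by
  have hpos : ∀ x ∈ Icc a (a + 1), 0 < x := fun x hx => ha.trans_le hx.1
  have hF : ∀ x ∈ Icc a (a + 1),
      HasDerivAt (fun y => -(y ^ (1 - s) / (s - 1))) (x ^ (-s)) x := by
    intro x hx
    refine ((Real.hasDerivAt_rpow_const (Or.inl (hpos x hx).ne')).div_const _).neg.congr_deriv ?_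
    rw [sub_sub_cancel_left]
    field_simp [sub_ne_zero.2 hs₁]
    ring
  -- the derivatives of `x ^ (-s)`, as in `iter_deriv_rpow_const`
  have h := eulerMaclaurin_six_sub_le
    (f := fun k x => (descPochhammer ℝ k).eval (-s) * x ^ (-s - k))
    (by simpa using hF) (fun k _ x hx => hasDerivAt_descPochhammer_mul_rpow _ k (hpos x hx))
    (fun x hx => (mul_pos (descPochhammer_eval_neg_pos_of_even hs (by decide))
      (Real.rpow_pos_of_pos (hpos x hx) _)).le)
  simp [descPochhammer_succ_eval] at h
  unfold zetaTailApprox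
  ring_nf at h ⊢
  linarith

theorem tendsto_zetaTailApprox {s : ℝ} (hs : 1 < s) :
    Tendsto (zetaTailApprox s) atTop (𝓝 0) := by
  have h : ∀ e : ℝ, e < 0 → Tendsto (fun x : ℝ => x ^ e) atTop (𝓝 0) := fun e he => by
    simpa using tendsto_rpow_neg_atTop (neg_pos.2 he)
  have := ((((h (1 - s) (by linarith)).div_const (s - 1)).add
    ((h (-s) (by linarith)).div_const 2)).add
    (((h (-s - 1) (by linarith)).const_mul s).div_const 12)).sub
    (((h (-s - 3) (by linarith)).const_mul (s * (s + 1) * (s + 2))).div_const 720)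
  unfold zetaTailApprox
  simpa using this

theorem le_tsum_of_le_add_succ {g u : ℕ → ℝ} (hu : Summable u) (hg : Tendsto g atTop (𝓝 0))
    (h : ∀ n, g n ≤ u n + g (n + 1)) : g 0 ≤ ∑' n, u n := by
  have hpartial : ∀ N, g 0 - g N ≤ ∑ n ∈ range N, u n := fun N => by
    rw [← neg_sub, ← sum_range_sub, ← sum_neg_distrib]
    exact sum_le_sum fun n _ => by linarith [h n]
  simpa using le_of_tendsto_of_tendsto' (tendsto_const_nhds.sub hg) hu.hasSum.tendsto_sum_nat
    hpartial

theorem zeta_lower_bound (α : ℝ) (hα : 0 < α) :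
    (∑' n : ℕ+, (n : ℝ) ^ (-(1+α)))
      ≥ 1/α + 1/2 + (α + 1)/12 - (α + 1)*(α + 2)*(α + 3)/720 := by
  have hs : 1 < 1 + α := by linarith
  have hsum : Summable fun n : ℕ => ((n + 1 : ℕ) : ℝ) ^ (-(1 + α)) :=
    (summable_nat_add_iff 1).2 (Real.summable_nat_rpow.2 (by linarith))
  have hlim := (tendsto_zetaTailApprox hs).comp
    (tendsto_atTop_add_const_right _ 1 tendsto_natCast_atTop_atTop)
  have key := le_tsum_of_le_add_succ hsum hlim fun n => by
    simpa [add_assoc] using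
      zetaTailApprox_le (by linarith) hs.ne' (Nat.cast_add_one_pos n)
  rw [ge_iff_le, tsum_pnat_eq_tsum_succ (f := fun n : ℕ => (n : ℝ) ^ (-(1 + α)))]
  convert key using 1
  simp [zetaTailApprox]
  ring
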